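/- arXiv:2401.11939 — 3 statements merged into one kernel-verified Lean document; each statement's English description precedes it below -/
import Mathlib

section
/- The refined Kato inequality for harmonic functions: if u is harmonic on an open set in ℝⁿ, then at every point where Du ≠ 0, one has |D²u|² ≥ (n/(n-1)) |D|Du||². -/
open scoped RealInnerProductSpace

noncomputable section

def stdVec {n : ℕ} (i : Fin n) : EuclideanSpace ℝ (Fin n) := EuclideanSpace.single i 1

def lap {n : ℕ} (u : EuclideanSpace ℝ (Fin n) → ℝ) (x : EuclideanSpace ℝ (Fin n)) : ℝ :=
  ∑ i, iteratedFDeriv ℝ 2 u x ![stdVec i, stdVec i]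

def hessNormSq {n : ℕ} (u : EuclideanSpace ℝ (Fin n) → ℝ) (x : EuclideanSpace ℝ (Fin n)) : ℝ :=
  ∑ i, ∑ j, (iteratedFDeriv ℝ 2 u x ![stdVec i, stdVec j]) ^ 2

lemma kato_num {n : ℕ} (hn : 2 ≤ n) (i0 : Fin n) (h : Fin n → Fin n → ℝ)
    (hsym : ∀ i j, h i j = h j i) (htr : ∑ i, h i i = 0) :
    ((n : ℝ) / ((n : ℝ) - 1)) * ∑ j, (h i0 j) ^ 2 ≤ ∑ i, ∑ j, (h i j) ^ 2 := by
  have hc1 : (1:ℝ) ≤ (n:ℝ) - 1 := by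
    have : (2:ℝ) ≤ (n:ℝ) := by exact_mod_cast hn
    linarith
  have hc0 : (0:ℝ) < (n:ℝ) - 1 := by linarith
  have haT : (h i0 i0) ^ 2 ≤ ∑ j, (h i0 j) ^ 2 := by
    have : ({i0} : Finset (Fin n)).sum (fun j => (h i0 j)^2) ≤ ∑ j, (h i0 j)^2 :=
      Finset.sum_le_sum_of_subset_of_nonneg (Finset.subset_univ _) (by intros; positivity)
    simpa using this
  set S : Finset (Fin n) := Finset.univ.erase i0 with hS
  have hcard : (S.card : ℝ) = (n : ℝ) - 1 := by
    rw [hS, Finset.card_erase_of_mem (Finset.mem_univ _), Finset.card_univ, Fintype.card_fin]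
    push_cast [Nat.cast_sub (by omega : 1 ≤ n)]
    ring
  have hsplit : ∑ i, ∑ j, (h i j) ^ 2 = (∑ j, (h i0 j) ^ 2) + ∑ i ∈ S, ∑ j, (h i j) ^ 2 := by
    rw [← Finset.add_sum_erase _ _ (Finset.mem_univ i0)]
  have hterm : ∀ i ∈ S, (h i i0) ^ 2 + (h i i) ^ 2 ≤ ∑ j, (h i j) ^ 2 := by
    intro i hi
    have hiz : i ≠ i0 := (Finset.mem_erase.1 hi).1
    have : ({i0, i} : Finset (Fin n)).sum (fun j => (h i j)^2) ≤ ∑ j, (h i j)^2 :=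
      Finset.sum_le_sum_of_subset_of_nonneg (Finset.subset_univ _) (by intros; positivity)
    rw [Finset.sum_pair (Ne.symm hiz)] at this
    linarith
  have h2 : ∑ i ∈ S, ((h i i0)^2 + (h i i)^2) ≤ ∑ i ∈ S, ∑ j, (h i j)^2 :=
    Finset.sum_le_sum hterm
  have htrS : ∑ i ∈ S, h i i = - h i0 i0 := by
    have h3 := Finset.add_sum_erase Finset.univ (fun i => h i i) (Finset.mem_univ i0)
    simp only [← hS] at h3
    linarith [htr, h3]
  have hCS : (∑ i ∈ S, h i i) ^ 2 ≤ S.card * ∑ i ∈ S, (h i i) ^ 2 :=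
    sq_sum_le_card_mul_sum_sq
  have hdiag : (h i0 i0) ^ 2 ≤ ((n:ℝ) - 1) * ∑ i ∈ S, (h i i) ^ 2 := by
    rw [htrS] at hCS; rw [← hcard]
    calc (h i0 i0)^2 = (-(h i0 i0))^2 := by ring
    _ ≤ _ := by exact_mod_cast hCS
  have hrow : ∑ i ∈ S, (h i i0) ^ 2 = (∑ j, (h i0 j) ^ 2) - (h i0 i0) ^ 2 := by
    have h4 : ∑ j, (h i0 j)^2 = (h i0 i0)^2 + ∑ j ∈ S, (h i0 j)^2 := by
      rw [← Finset.add_sum_erase _ _ (Finset.mem_univ i0)]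
    have hsw : ∑ i ∈ S, (h i i0)^2 = ∑ i ∈ S, (h i0 i)^2 :=
      Finset.sum_congr rfl (fun i _ => by rw [hsym])
    linarith
  set T := ∑ j, (h i0 j) ^ 2 with hT
  set a := (h i0 i0) ^ 2 with ha
  set D := ∑ i ∈ S, (h i i) ^ 2 with hD
  have hbig : T + ((T - a) + D) ≤ ∑ i, ∑ j, (h i j)^2 := by
    rw [hsplit]
    have h5 : ∑ i ∈ S, ((h i i0)^2 + (h i i)^2) = (T - a) + D := by
      rw [Finset.sum_add_distrib, hrow]
    linarith [h2, h5.symm.le]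
  have ha0 : 0 ≤ a := by positivity
  rw [div_mul_eq_mul_div, div_le_iff₀ hc0]
  have e1 : ((n:ℝ)-1) * (T + ((T - a) + D)) ≤ ((n:ℝ)-1) * (∑ i, ∑ j, (h i j)^2) :=
    mul_le_mul_of_nonneg_left hbig hc0.le
  have e2 : ((n:ℝ)-2) * a ≤ ((n:ℝ)-2) * T := mul_le_mul_of_nonneg_left haT (by linarith)
  nlinarith [e1, e2, hdiag, ha0, haT]

lemma parseval {n : ℕ} (c : OrthonormalBasis (Fin n) ℝ (EuclideanSpace ℝ (Fin n)))
    (y : EuclideanSpace ℝ (Fin n)) : ‖y‖ ^ 2 = ∑ j, ⟪y, c j⟫ ^ 2 := by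
  rw [← real_inner_self_eq_norm_sq, ← c.sum_inner_mul_inner y y]
  exact Finset.sum_congr rfl fun j _ => by rw [real_inner_comm (c j) y, sq]

lemma sum_normsq_basis {n : ℕ} (b c : OrthonormalBasis (Fin n) ℝ (EuclideanSpace ℝ (Fin n)))
    (A : EuclideanSpace ℝ (Fin n) →L[ℝ] EuclideanSpace ℝ (Fin n))
    (hA : ∀ w z, ⟪A w, z⟫ = ⟪A z, w⟫) :
    ∑ i, ‖A (b i)‖ ^ 2 = ∑ i, ‖A (c i)‖ ^ 2 := by
  calc ∑ i, ‖A (b i)‖ ^ 2 = ∑ i, ∑ j, ⟪A (b i), c j⟫ ^ 2 :=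
        Finset.sum_congr rfl fun i _ => parseval c _
    _ = ∑ j, ∑ i, ⟪A (c j), b i⟫ ^ 2 := by
        rw [Finset.sum_comm]
        exact Finset.sum_congr rfl fun j _ => Finset.sum_congr rfl fun i _ => by rw [hA]
    _ = ∑ j, ‖A (c j)‖ ^ 2 := Finset.sum_congr rfl fun j _ => (parseval b _).symm

lemma trace_basis {n : ℕ} (b c : OrthonormalBasis (Fin n) ℝ (EuclideanSpace ℝ (Fin n)))
    (A : EuclideanSpace ℝ (Fin n) →L[ℝ] EuclideanSpace ℝ (Fin n))
    (hA : ∀ w z, ⟪A w, z⟫ = ⟪A z, w⟫) :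
    ∑ i, ⟪A (b i), b i⟫ = ∑ j, ⟪A (c j), c j⟫ := by
  calc ∑ i, ⟪A (b i), b i⟫ = ∑ i, ∑ j, ⟪A (b i), c j⟫ * ⟪c j, b i⟫ :=
        Finset.sum_congr rfl fun i _ => (c.sum_inner_mul_inner _ _).symm
    _ = ∑ j, ∑ i, ⟪A (c j), b i⟫ * ⟪b i, c j⟫ := by
        rw [Finset.sum_comm]
        refine Finset.sum_congr rfl fun j _ => Finset.sum_congr rfl fun i _ => by
          rw [hA, real_inner_comm (c j) (b i)]
    _ = ∑ j, ⟪A (c j), c j⟫ := Finset.sum_congr rfl fun j _ => b.sum_inner_mul_inner _ _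


lemma kato_alg {n : ℕ} (hn : 2 ≤ n)
    (A : EuclideanSpace ℝ (Fin n) →L[ℝ] EuclideanSpace ℝ (Fin n))
    (hA : ∀ w z, ⟪A w, z⟫ = ⟪A z, w⟫)
    (htr : ∑ i, ⟪A (stdVec i), stdVec i⟫ = 0)
    (v : EuclideanSpace ℝ (Fin n)) (hv : v ≠ 0) :
    ((n : ℝ) / ((n : ℝ) - 1)) * (‖v‖⁻¹ * ‖A v‖) ^ 2 ≤
      ∑ i, ∑ j, ⟪A (stdVec i), stdVec j⟫ ^ 2 := by
  haveI : NeZero n := ⟨by omega⟩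
  set e : OrthonormalBasis (Fin n) ℝ (EuclideanSpace ℝ (Fin n)) :=
    EuclideanSpace.basisFun (Fin n) ℝ with he
  have hest : ∀ i, e i = stdVec i := fun i => by
    rw [he, EuclideanSpace.basisFun_apply]; rfl
  -- adapted orthonormal basis
  set w : EuclideanSpace ℝ (Fin n) := ‖v‖⁻¹ • v with hw
  have hnv : ‖v‖ ≠ 0 := norm_ne_zero_iff.2 hv
  have hwnorm : ‖w‖ = 1 := by
    rw [hw, norm_smul, norm_inv, norm_norm, inv_mul_cancel₀ hnv]
  have horth : Orthonormal ℝ (Set.restrict {(0 : Fin n)} (fun _ : Fin n => w)) := by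
    constructor
    · intro i; exact hwnorm
    · intro i j hij
      exact absurd (Subtype.ext (by
        have hi := i.2; have hj := j.2
        simp only [Set.mem_singleton_iff] at hi hj
        rw [hi, hj])) hij
  obtain ⟨c, hc⟩ := Orthonormal.exists_orthonormalBasis_extension_of_card_eq
    (by simp [finrank_euclideanSpace_fin]) horth
  have hc0 : c 0 = w := hc 0 rfl
  set h : Fin n → Fin n → ℝ := fun i j => ⟪A (c i), c j⟫ with hh
  have hsym : ∀ i j, h i j = h j i := fun i j => hA (c i) (c j)
  have htr' : ∑ i, h i i = 0 := by
    rw [hh]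
    have := trace_basis e c A hA
    simp only [hest] at this
    rw [← this, htr]
  have hrhs : ∑ i, ∑ j, ⟪A (stdVec i), stdVec j⟫ ^ 2 = ∑ i, ∑ j, (h i j) ^ 2 := by
    have h1 : ∑ i, ∑ j, ⟪A (stdVec i), stdVec j⟫ ^ 2 = ∑ i, ‖A (stdVec i)‖ ^ 2 := by
      refine Finset.sum_congr rfl fun i _ => ?_
      rw [parseval e]
      exact Finset.sum_congr rfl fun j _ => by rw [hest]
    have h2 : ∑ i, ∑ j, (h i j) ^ 2 = ∑ i, ‖A (c i)‖ ^ 2 :=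
      Finset.sum_congr rfl fun i _ => (parseval c _).symm
    rw [h1, h2]
    have := sum_normsq_basis e c A hA
    simp only [hest] at this
    exact this
  have hlhs : (‖v‖⁻¹ * ‖A v‖) ^ 2 = ∑ j, (h 0 j) ^ 2 := by
    have hAw : A (c 0) = ‖v‖⁻¹ • A v := by rw [hc0, hw, map_smul]
    have : ‖A (c 0)‖ = ‖v‖⁻¹ * ‖A v‖ := by
      rw [hAw, norm_smul, norm_inv, norm_norm]
    rw [← this, parseval c]
  rw [hrhs, hlhs]
  exact kato_num hn 0 h hsym htr'

/-- **Refined Kato inequality for harmonic functions**: if `u` is harmonic on an open set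
`U ⊆ ℝⁿ` (`n ≥ 2`), then at every point `x ∈ U` with `Du(x) ≠ 0` one has
`|D²u|² ≥ (n/(n-1)) |D|Du||²`. -/
theorem refined_kato {n : ℕ} (hn : 2 ≤ n)
    (U : Set (EuclideanSpace ℝ (Fin n))) (hU : IsOpen U)
    (u : EuclideanSpace ℝ (Fin n) → ℝ) (hu : ContDiffOn ℝ (⊤ : ℕ∞) u U)
    (hharm : ∀ x ∈ U, lap u x = 0) :
    ∀ x ∈ U, gradient u x ≠ 0 →
      ((n : ℝ) / ((n : ℝ) - 1)) * ‖gradient (fun y => ‖gradient u y‖) x‖ ^ 2 ≤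
        hessNormSq u x := by
  intro x hx hv
  haveI : NeZero n := ⟨by omega⟩
  set v := gradient u x with hvdef
  have hux : ContDiffAt ℝ (⊤ : ℕ∞) u x := hu.contDiffAt (hU.mem_nhds hx)
  have hf1 : ContDiffAt ℝ 1 (fderiv ℝ u) x := hux.fderiv_right (by exact WithTop.coe_le_coe.2 le_top)
  have hdf : DifferentiableAt ℝ (fderiv ℝ u) x := hf1.differentiableAt one_ne_zero
  set F2 := fderiv ℝ (fderiv ℝ u) x with hF2
  have hF2symm : ∀ w z, F2 w z = F2 z w := hux.isSymmSndFDerivAt (by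
    rw [minSmoothness_of_isRCLikeNormedField]; exact WithTop.coe_le_coe.2 (le_top : (2 : ℕ∞) ≤ ⊤))
  have hiter : ∀ w z, iteratedFDeriv ℝ 2 u x ![w, z] = F2 w z := by
    intro w z
    rw [iteratedFDeriv_two_apply]
    simp
    rfl
  -- the gradient as a sum over the standard basis
  have hginner : ∀ (y : EuclideanSpace ℝ (Fin n)) z, ⟪gradient u y, z⟫ = fderiv ℝ u y z := by
    intro y z
    exact InnerProductSpace.toDual_symm_apply
  set e : OrthonormalBasis (Fin n) ℝ (EuclideanSpace ℝ (Fin n)) :=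
    EuclideanSpace.basisFun (Fin n) ℝ with he
  have hG : ∀ y, gradient u y = ∑ i, (fderiv ℝ u y (e i)) • e i := by
    intro y
    have := e.sum_repr' (gradient u y)
    rw [← this]
    refine Finset.sum_congr rfl fun i _ => ?_
    rw [real_inner_comm, hginner]
  -- derivative of the gradient
  set A : EuclideanSpace ℝ (Fin n) →L[ℝ] EuclideanSpace ℝ (Fin n) :=
    ∑ i, ((ContinuousLinearMap.apply ℝ ℝ (e i)).comp F2).smulRight (e i) with hA
  have hAapp : ∀ w, A w = ∑ i, (F2 w (e i)) • e i := by
    intro w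
    rw [hA]
    simp [ContinuousLinearMap.sum_apply]
  have hGderiv : HasFDerivAt (gradient u) A x := by
    have : HasFDerivAt (fun y => ∑ i, (fderiv ℝ u y (e i)) • e i) A x := by
      rw [hA]
      apply HasFDerivAt.fun_sum
      intro i _
      exact (((ContinuousLinearMap.apply ℝ ℝ (e i)).hasFDerivAt.comp x
        hdf.hasFDerivAt)).smul_const (e i)
    exact this.congr_of_eventuallyEq (Filter.Eventually.of_forall fun y => (hG y))
  have hAinner : ∀ w z, ⟪A w, z⟫ = F2 w z := by
    intro w z
    rw [hAapp, sum_inner]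
    have hz : F2 w z = F2 w (∑ i, ⟪e i, z⟫ • e i) := by rw [e.sum_repr' z]
    rw [hz, map_sum]
    refine Finset.sum_congr rfl fun i _ => ?_
    rw [real_inner_smul_left, map_smul]
    simp [mul_comm]
  have hAsymm : ∀ w z, ⟪A w, z⟫ = ⟪A z, w⟫ := by
    intro w z; rw [hAinner, hAinner, hF2symm]
  -- derivative of ‖gradient u ·‖
  have hq : HasFDerivAt (fun y => ⟪gradient u y, gradient u y⟫)
      ((fderivInnerCLM ℝ (v, v)).comp (A.prod A)) x :=
    hGderiv.inner ℝ hGderiv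
  have hqx : ⟪v, v⟫ = ‖v‖ * ‖v‖ := real_inner_self_eq_norm_mul_norm v
  have hvpos : (0:ℝ) < ‖v‖ := norm_pos_iff.2 hv
  have hqne : ⟪v, v⟫ ≠ 0 := by rw [hqx]; positivity
  have hsqrt : Real.sqrt ⟪v, v⟫ = ‖v‖ := by
    rw [hqx, Real.sqrt_mul_self (norm_nonneg v)]
  have hnorm_eq : (fun y => ‖gradient u y‖) =
      fun y => Real.sqrt ⟪gradient u y, gradient u y⟫ := by
    funext y
    rw [real_inner_self_eq_norm_mul_norm, Real.sqrt_mul_self (norm_nonneg _)]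
  have hgderiv : HasFDerivAt (fun y => ‖gradient u y‖)
      ((1 / (2 * ‖v‖)) • ((fderivInnerCLM ℝ (v, v)).comp (A.prod A))) x := by
    rw [hnorm_eq]
    have := (Real.hasDerivAt_sqrt hqne).comp_hasFDerivAt x hq
    rwa [hsqrt] at this
  have hgrad : HasGradientAt (fun y => ‖gradient u y‖) (‖v‖⁻¹ • A v) x := by
    rw [hasGradientAt_iff_hasFDerivAt]
    refine hgderiv.congr_fderiv ?_
    symm
    ext w
    simp only [ContinuousLinearMap.smul_apply, ContinuousLinearMap.coe_comp',
      Function.comp_apply, ContinuousLinearMap.prod_apply, fderivInnerCLM_apply]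
    rw [InnerProductSpace.toDual_apply_apply]
    rw [real_inner_smul_left]
    have h1 : ⟪v, A w⟫ = ⟪A v, w⟫ := by
      rw [real_inner_comm]; exact hAsymm w v
    have h2 : ⟪A w, v⟫ = ⟪A v, w⟫ := hAsymm w v
    rw [h1, h2]
    field_simp
    rw [smul_eq_mul]
    field_simp [hvpos.ne']
    ring
  have hgradval : gradient (fun y => ‖gradient u y‖) x = ‖v‖⁻¹ • A v := hgrad.gradient
  have hnormgrad : ‖gradient (fun y => ‖gradient u y‖) x‖ = ‖v‖⁻¹ * ‖A v‖ := by
    rw [hgradval, norm_smul, norm_inv, norm_norm]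
  -- trace and conclusion
  have htr : ∑ i, ⟪A (stdVec i), stdVec i⟫ = 0 := by
    have := hharm x hx
    rw [lap] at this
    rw [← this]
    exact Finset.sum_congr rfl fun i _ => by rw [hAinner, ← hiter]
  have hhess : hessNormSq u x = ∑ i, ∑ j, ⟪A (stdVec i), stdVec j⟫ ^ 2 := by
    rw [hessNormSq]
    exact Finset.sum_congr rfl fun i _ => Finset.sum_congr rfl fun j _ => by
      rw [hAinner, ← hiter]
  rw [hnormgrad, hhess]
  exact kato_alg hn A hAsymm htr v hv
end
end

section
/- Let n ≥ 3, β ≥ (n-2)/(n-1), and u(x) = (R/|x|)^{n-2} on ℝⁿ \ B_R(0). With F, G defined via F(u) = (c u + d) u^{1-(n-1)β/(n-2)}, G(u) = -((n-1)β/((n-2)u)) F(u) + d u^{-(n-1)β/(n-2)}, the vector field Z = F(u) D|Du|^β + G(u) |Du|^β Du satisfies div Z = 0 on ℝⁿ \ \bar{B_R(0)}. -/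
/-! Writing `u = C‖x‖^p` with `p = 2 - n`, radiality gives
`D|Du|^β = ((p-1)β/(p u)) |Du|^β Du`, and `(p-1)β/p = (n-1)β/(n-2)`, so the two `F`-terms of
`Z` cancel. Moreover `u^{-(p-1)β/p} |Du|^β` is constant, so `Z` is a constant
multiple of `Du`, and `div Z = 0` because `Δ(C‖x‖^p) = Cp(n+p-2)‖x‖^{p-2}` vanishes for
`p = 2 - n`. -/

noncomputable section

/-- The Euclidean divergence of a vector field. -/
def ediv {n : ℕ} (Z : EuclideanSpace ℝ (Fin n) → EuclideanSpace ℝ (Fin n))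
    (x : EuclideanSpace ℝ (Fin n)) : ℝ :=
  ∑ i, fderiv ℝ Z x (stdVec i) i

open Filter Topology InnerProductSpace

section RadialPower

variable {E : Type*} [NormedAddCommGroup E] [InnerProductSpace ℝ E]

theorem hasFDerivAt_norm_rpow_of_ne_zero (p : ℝ) {x : E} (hx : x ≠ 0) :
    HasFDerivAt (fun y : E => ‖y‖ ^ p) ((p * ‖x‖ ^ (p - 2)) • innerSL ℝ x) x := by
  convert! ((hasStrictFDerivAt_norm_sq x).rpow_const (p := p / 2) (by simp [hx])).hasFDerivAt
    using 0
  simp_rw [← Real.rpow_natCast_mul (norm_nonneg _), ← Nat.cast_smul_eq_nsmul ℝ, smul_smul]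
  ring_nf

def radialPow (C p : ℝ) (y : E) : ℝ := C * ‖y‖ ^ p

variable [CompleteSpace E] {C p : ℝ} {x : E}

theorem hasGradientAt_radialPow (hx : x ≠ 0) :
    HasGradientAt (radialPow C p) ((C * p * ‖x‖ ^ (p - 2)) • x) x := by
  rw [hasGradientAt_iff_hasFDerivAt]
  refine ((hasFDerivAt_norm_rpow_of_ne_zero p hx).const_mul C).congr_fderiv ?_
  ext y
  simp only [smul_apply, coe_innerSL_apply, smul_eq_mul, map_smul, toDual_apply_apply]
  ring

theorem norm_gradient_radialPow_rpow (β : ℝ) (hx : x ≠ 0) :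
    ‖gradient (radialPow C p) x‖ ^ β = |C * p| ^ β * ‖x‖ ^ ((p - 1) * β) := by
  have hr : 0 < ‖x‖ := norm_pos_iff.mpr hx
  have hnorm : ‖(C * p * ‖x‖ ^ (p - 2)) • x‖ = |C * p| * ‖x‖ ^ (p - 1) := by
    rw [norm_smul, Real.norm_eq_abs, abs_mul, abs_of_pos (Real.rpow_pos_of_pos hr _), mul_assoc,
      ← Real.rpow_add_one hr.ne']
    ring_nf
  rw [(hasGradientAt_radialPow hx).gradient, hnorm,
    Real.mul_rpow (abs_nonneg _) (by positivity), ← Real.rpow_mul hr.le]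

theorem gradient_norm_gradient_radialPow_rpow (hC : C ≠ 0) (hp : p ≠ 0) (β : ℝ) (hx : x ≠ 0) :
    gradient (fun y => ‖gradient (radialPow C p) y‖ ^ β) x =
      ((p - 1) * β / (p * radialPow C p x) * ‖gradient (radialPow C p) x‖ ^ β) •
        gradient (radialPow C p) x := by
  have hr : 0 < ‖x‖ := norm_pos_iff.mpr hx
  have hradial : (fun y => ‖gradient (radialPow C p) y‖ ^ β) =ᶠ[𝓝 x]
      radialPow (|C * p| ^ β) ((p - 1) * β) :=
    eventuallyEq_of_mem (compl_singleton_mem_nhds hx) fun y hy =>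
      norm_gradient_radialPow_rpow β hy
  have hpow : ‖x‖ ^ ((p - 1) * β - 2) = ‖x‖ ^ ((p - 1) * β) * ‖x‖ ^ (p - 2) / ‖x‖ ^ p := by
    rw [← Real.rpow_add hr, ← Real.rpow_sub hr]
    ring_nf
  rw [hradial.gradient_eq, (hasGradientAt_radialPow hx).gradient,
    norm_gradient_radialPow_rpow β hx, (hasGradientAt_radialPow hx).gradient, smul_smul,
    radialPow, hpow]
  congr 1
  field_simp

theorem radialPow_rpow_mul_norm_gradient_rpow (hC : 0 < C) (hp : p ≠ 0) (β : ℝ) (hx : x ≠ 0) :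
    radialPow C p x ^ (-((p - 1) * β / p)) * ‖gradient (radialPow C p) x‖ ^ β =
      C ^ (-((p - 1) * β / p)) * |C * p| ^ β := by
  have hr : 0 < ‖x‖ := norm_pos_iff.mpr hx
  have hexp : p * -((p - 1) * β / p) = -((p - 1) * β) := by field_simp
  rw [radialPow, Real.mul_rpow hC.le (by positivity), ← Real.rpow_mul hr.le, hexp,
    Real.rpow_neg hr.le, norm_gradient_radialPow_rpow β hx]
  field_simp

end RadialPower

section Divergence

variable {n : ℕ} {x : EuclideanSpace ℝ (Fin n)} {C p : ℝ}

theorem Filter.EventuallyEq.ediv_eq {Z W : EuclideanSpace ℝ (Fin n) → EuclideanSpace ℝ (Fin n)}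
    (h : Z =ᶠ[𝓝 x] W) : ediv Z x = ediv W x := by
  simp only [ediv, h.fderiv_eq]

theorem HasFDerivAt.ediv_smul_self {f : EuclideanSpace ℝ (Fin n) → ℝ}
    {f' : EuclideanSpace ℝ (Fin n) →L[ℝ] ℝ} (hf : HasFDerivAt f f' x) :
    ediv (fun y => f y • y) x = n * f x + f' x := by
  have hx : f' x = ∑ i, f' (stdVec i) * x i := by
    conv_lhs => rw [← (EuclideanSpace.basisFun (Fin n) ℝ).sum_repr x]
    simp [stdVec, mul_comm]
  have hfx : HasFDerivAt (fun y => f y • y) (f x • ContinuousLinearMap.id ℝ _ + f'.smulRight x) x :=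
    hf.smul (hasFDerivAt_id x)
  rw [ediv, hfx.fderiv, hx]
  simp [stdVec, Finset.sum_add_distrib]

theorem ediv_gradient_radialPow (hx : x ≠ 0) :
    ediv (gradient (radialPow C p)) x = C * p * (n + p - 2) * ‖x‖ ^ (p - 2) := by
  have hr : 0 < ‖x‖ := norm_pos_iff.mpr hx
  have hgrad : gradient (radialPow C p) =ᶠ[𝓝 x] fun y => (C * p * ‖y‖ ^ (p - 2)) • y :=
    eventuallyEq_of_mem (compl_singleton_mem_nhds hx) fun y hy =>
      (hasGradientAt_radialPow hy).gradient
  have hpow : ‖x‖ ^ (p - 2 - 2) * ‖x‖ ^ 2 = ‖x‖ ^ (p - 2) := by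
    rw [← Real.rpow_natCast, ← Real.rpow_add hr]
    norm_num
  rw [hgrad.ediv_eq,
    ((hasFDerivAt_norm_rpow_of_ne_zero (p - 2) hx).const_mul (C * p)).ediv_smul_self]
  simp only [← hpow, smul_apply, coe_innerSL_apply, real_inner_self_eq_norm_sq, smul_eq_mul]
  ring

end Divergence

theorem radial_div_Z_zero_general {n : ℕ} (hn : 3 ≤ n) (R : ℝ) (hR : 0 < R) (d : ℝ)
    (β : ℝ)
    (u : EuclideanSpace ℝ (Fin n) → ℝ)
    (hu : ∀ x, u x = R ^ (n - 2) * ‖x‖ ^ (-((n : ℝ) - 2)))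
    (F G : ℝ → ℝ)
    (hG : ∀ t, G t = -(((n : ℝ) - 1) * β / (((n : ℝ) - 2) * t)) * F t +
      d * t ^ (-(((n : ℝ) - 1) * β / ((n : ℝ) - 2))))
    (Z : EuclideanSpace ℝ (Fin n) → EuclideanSpace ℝ (Fin n))
    (hZ : ∀ x, Z x = F (u x) • gradient (fun y => ‖gradient u y‖ ^ β) x +
      (G (u x) * ‖gradient u x‖ ^ β) • gradient u x) :
    ∀ x : EuclideanSpace ℝ (Fin n), R < ‖x‖ → ediv Z x = 0 := by
  intro x hx
  set C : ℝ := R ^ (n - 2)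
  set p : ℝ := -((n : ℝ) - 2)
  have hC : 0 < C := pow_pos hR _
  have hp : p ≠ 0 := by have : (3 : ℝ) ≤ n := mod_cast hn; simp only [p]; linarith
  have he : ((n : ℝ) - 1) * β / ((n : ℝ) - 2) = (p - 1) * β / p := by
    simp only [p]; rw [← neg_div_neg_eq]; ring_nf
  obtain rfl : u = radialPow C p := funext hu
  set κ : ℝ := d * (C ^ (-((p - 1) * β / p)) * |C * p| ^ β)
  have hZ_grad : ∀ y ≠ 0, Z y = gradient (radialPow (κ * C) p) y := by
    intro y hy
    calc Z y = (d * (radialPow C p y ^ (-((p - 1) * β / p)) * ‖gradient (radialPow C p) y‖ ^ β))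
          • gradient (radialPow C p) y := by
          rw [hZ, hG, ← div_div, he, gradient_norm_gradient_radialPow_rpow hC.ne' hp β hy,
            smul_smul, ← add_smul, div_div]
          congr 1
          ring
      _ = gradient (radialPow (κ * C) p) y := by
          rw [radialPow_rpow_mul_norm_gradient_rpow hC hp β hy,
            (hasGradientAt_radialPow hy).gradient, (hasGradientAt_radialPow hy).gradient,
            smul_smul]
          congr 1
          simp only [κ]
          ring
  have hx0 : x ≠ 0 := norm_pos_iff.mp (hR.trans hx)
  rw [(eventuallyEq_of_mem (compl_singleton_mem_nhds hx0) hZ_grad).ediv_eq,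
    ediv_gradient_radialPow hx0]
  simp [p]

/-- For the radial potential `u(x) = (R/|x|)^{n-2}` and the vector field
`Z = F(u)D|Du|^β + G(u)|Du|^β Du` with `F(t) = (ct+d)t^{1-(n-1)β/(n-2)}`,
`G(t) = -((n-1)β/((n-2)t))F(t) + d t^{-(n-1)β/(n-2)}`, one has `div Z = 0`
outside the closed ball of radius `R`. -/
theorem radial_div_Z_zero {n : ℕ} (hn : 3 ≤ n) (R : ℝ) (hR : 0 < R) (c d : ℝ)
    (β : ℝ) (hβ : ((n : ℝ) - 2) / ((n : ℝ) - 1) ≤ β)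
    (u : EuclideanSpace ℝ (Fin n) → ℝ)
    (hu : ∀ x, u x = R ^ (n - 2) * ‖x‖ ^ (-((n : ℝ) - 2)))
    (F G : ℝ → ℝ)
    (hF : ∀ t, F t = (c * t + d) * t ^ (1 - ((n : ℝ) - 1) * β / ((n : ℝ) - 2)))
    (hG : ∀ t, G t = -(((n : ℝ) - 1) * β / (((n : ℝ) - 2) * t)) * F t +
      d * t ^ (-(((n : ℝ) - 1) * β / ((n : ℝ) - 2))))
    (Z : EuclideanSpace ℝ (Fin n) → EuclideanSpace ℝ (Fin n))
    (hZ : ∀ x, Z x = F (u x) • gradient (fun y => ‖gradient u y‖ ^ β) x +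
      (G (u x) * ‖gradient u x‖ ^ β) • gradient u x) :
    ∀ x : EuclideanSpace ℝ (Fin n), R < ‖x‖ → ediv Z x = 0 :=
  radial_div_Z_zero_general hn R hR d β u hu F G hG Z hZ
end
end

section
/- With Z = F(u)D|Du|^β + G(u)|Du|^β Du on a regular level set {u = u₀} with outward normal ν = -Du/|Du|, one has δ(Z,ν) = -β F(u)|Du|^β H - G(u)|Du|^{β+1}, where H is the mean curvature of the level set with respect to ν. -/
noncomputable section
open InnerProductSpace

/-- The inverse of `toDual` over `ℝ` as a genuine continuous linear map. -/
def dualInv (E : Type*) [NormedAddCommGroup E] [InnerProductSpace ℝ E] [CompleteSpace E] :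
    StrongDual ℝ E →L[ℝ] E :=
  { toFun := fun ℓ => (toDual ℝ E).symm ℓ
    map_add' := fun a b => by simp
    map_smul' := fun c a => by simp
    cont := (toDual ℝ E).symm.continuous }

/-- With `Z = F(u)D|Du|^β + G(u)|Du|^β Du` and `ν = -Du/|Du|` on a regular level set
`{u = u₀}`, one has `δ(Z,ν) = -β F(u)|Du|^β H - G(u)|Du|^{β+1}`, where
`H = D²u(Du,Du)/|Du|³` is the mean curvature of the level set with respect to `ν`. -/
theorem Z_dot_normal {n : ℕ} (U : Set (EuclideanSpace ℝ (Fin n))) (hU : IsOpen U)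
    (u : EuclideanSpace ℝ (Fin n) → ℝ) (hu : ContDiffOn ℝ (⊤ : ℕ∞) u U)
    (hharm : ∀ x ∈ U, lap u x = 0) (u₀ : ℝ)
    (β : ℝ) (hβ : 0 ≤ β) (F G : ℝ → ℝ)
    (hF : ContDiff ℝ (⊤ : ℕ∞) F) (hG : ContDiff ℝ (⊤ : ℕ∞) G)
    (Z : EuclideanSpace ℝ (Fin n) → EuclideanSpace ℝ (Fin n))
    (hZ : ∀ x, Z x = F (u x) • gradient (fun y => ‖gradient u y‖ ^ β) x +
      (G (u x) * ‖gradient u x‖ ^ β) • gradient u x) :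
    ∀ x ∈ U, u x = u₀ → gradient u x ≠ 0 →
      (inner ℝ (Z x) (-(‖gradient u x‖⁻¹) • gradient u x) : ℝ) =
        -(β * F (u x) * ‖gradient u x‖ ^ β *
            (iteratedFDeriv ℝ 2 u x ![gradient u x, gradient u x] / ‖gradient u x‖ ^ 3)) -
          G (u x) * ‖gradient u x‖ ^ (β + 1) := by
  intro x hx hxu0 hg0
  set g : EuclideanSpace ℝ (Fin n) → EuclideanSpace ℝ (Fin n) := gradient u with hgdef
  set r : ℝ := ‖g x‖ with hrdef
  have hr : (0:ℝ) < r := norm_pos_iff.mpr hg0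
  set K : ℝ := iteratedFDeriv ℝ 2 u x ![g x, g x] with hKdef
  -- smoothness of u at x
  have hxU : U ∈ nhds x := hU.mem_nhds hx
  have hcu : ContDiffAt ℝ (⊤ : ℕ∞) u x := hu.contDiffAt hxU
  have hdf1 : ContDiffAt ℝ 1 (fderiv ℝ u) x := hcu.fderiv_right (by exact (WithTop.coe_le_coe.mpr le_top))
  have hdf : DifferentiableAt ℝ (fderiv ℝ u) x := hdf1.differentiableAt one_ne_zero
  set T := dualInv (EuclideanSpace ℝ (Fin n)) with hTdef
  set A := fderiv ℝ (fderiv ℝ u) x with hAdef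
  have hgc : g = fun y => T (fderiv ℝ u y) := rfl
  have hg' : HasFDerivAt g (T.comp A) x := by
    rw [hgc]; exact T.hasFDerivAt.comp x hdf.hasFDerivAt
  -- inner square function
  have hgg : HasFDerivAt (fun y => (inner ℝ (g y) (g y) : ℝ))
      ((fderivInnerCLM ℝ (g x, g x)).comp ((T.comp A).prod (T.comp A))) x :=
    hg'.inner ℝ hg'
  have hrpow : HasDerivAt (fun t : ℝ => t ^ (β/2))
      ((β/2) * ((inner ℝ (g x) (g x) : ℝ)) ^ (β/2 - 1)) ((inner ℝ (g x) (g x) : ℝ)) := by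
    apply Real.hasDerivAt_rpow_const
    left
    have : (inner ℝ (g x) (g x) : ℝ) = r ^ 2 := real_inner_self_eq_norm_sq (g x)
    rw [this]; positivity
  have hphi : HasFDerivAt (fun y => ‖g y‖ ^ β)
      (((β/2) * ((inner ℝ (g x) (g x) : ℝ)) ^ (β/2 - 1)) •
        ((fderivInnerCLM ℝ (g x, g x)).comp ((T.comp A).prod (T.comp A)))) x := by
    have h := hrpow.comp_hasFDerivAt x hgg
    have he : (fun y => ‖g y‖ ^ β) = fun y => (inner ℝ (g y) (g y) : ℝ) ^ (β/2) := by
      funext y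
      rw [real_inner_self_eq_norm_sq, ← Real.rpow_natCast ‖g y‖ 2,
        ← Real.rpow_mul (norm_nonneg _)]
      congr 1
      ring
    rw [he]
    exact h
  -- the key inner product identity
  have hinner : (inner ℝ (gradient (fun y => ‖g y‖ ^ β) x) (g x) : ℝ)
      = β * (r ^ β / r ^ 2) * K := by
    have hgr : gradient (fun y => ‖g y‖ ^ β) x =
        (toDual ℝ (EuclideanSpace ℝ (Fin n))).symm
          ((((β/2) * ((inner ℝ (g x) (g x) : ℝ)) ^ (β/2 - 1)) •
        ((fderivInnerCLM ℝ (g x, g x)).comp ((T.comp A).prod (T.comp A)))) :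
          (EuclideanSpace ℝ (Fin n)) →L[ℝ] ℝ) := by
      rw [gradient, hphi.fderiv]
    rw [hgr, toDual_symm_apply]
    have hTA : ∀ v w : EuclideanSpace ℝ (Fin n), (inner ℝ (T (A v)) w : ℝ) = A v w := by
      intro v w
      simp [hTdef, dualInv, toDual_symm_apply]
    have hK : K = A (g x) (g x) := by
      rw [hKdef, iteratedFDeriv_two_apply]; simp [hAdef]
    have hin : (inner ℝ (g x) (g x) : ℝ) = r ^ 2 := real_inner_self_eq_norm_sq (g x)
    simp only [ContinuousLinearMap.smul_apply, ContinuousLinearMap.comp_apply,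
      ContinuousLinearMap.prod_apply, fderivInnerCLM_apply, smul_eq_mul]
    rw [real_inner_comm (T (A (g x))) (g x), hTA, ← hK, hin]
    have h2 : ((r ^ 2 : ℝ)) ^ (β/2 - 1) = r ^ β / r ^ 2 := by
      rw [← Real.rpow_natCast r 2, ← Real.rpow_mul (le_of_lt hr),
        show ((2:ℕ):ℝ) * (β/2 - 1) = β - 2 by push_cast; ring,
        Real.rpow_sub hr]
      rw [show (2:ℝ) = ((2:ℕ):ℝ) by norm_num, Real.rpow_natCast]
    rw [h2]
    ring
  -- expand and conclude
  rw [hZ x]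
  rw [inner_smul_right, inner_add_left, real_inner_smul_left, real_inner_smul_left,
    real_inner_self_eq_norm_sq]
  rw [← hrdef, hinner]
  have hb1 : r ^ (β + 1) = r ^ β * r := by
    rw [Real.rpow_add hr, Real.rpow_one]
  rw [hb1]
  field_simp
  ring
end
end
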